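/- Let A=(S,R) be a finite argumentation network. The maps h ↦ λ_h and λ ↦ h_λ are mutually inverse bijections between the set of assignments h that are models of Δ_A (i.e. t ⊨_h φ for all φ∈Δ_A) and the set of complete extensions of A. -/

import Mathlib

/-- The three Caminada labels. -/
inductive Label where
  | in_ : Label
  | out : Label
  | und : Label
deriving DecidableEq

/-- Propositional intuitionistic formulas over atoms `α`, with the
distinguished constant `nconst` (the paper's `n`). -/
inductive Form (α : Type) where
  | atom : α → Form α
  | nconst : Form α
  | top : Form α
  | bot : Form α
  | and : Form α → Form α → Form α
  | or : Form α → Form α → Form α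
  | imp : Form α → Form α → Form α
  | neg : Form α → Form α

/-- Forcing in the two-world Kripke model: world `false` is `t`, world `true`
is `s`, with `t < s` (i.e. the Bool order). `h` assigns to each atom its pair
of truth values (at `t`, at `s`). The constant `n` has value `(⊥,⊤)`. -/
def force {α : Type} (h : α → Bool × Bool) : Bool → Form α → Prop
  | w, .atom x => (if w then (h x).2 else (h x).1) = true
  | w, .nconst => w = true
  | _, .top => True
  | _, .bot => False
  | w, .and A B => force h w A ∧ force h w B
  | w, .or A B => force h w A ∨ force h w B
  | w, .imp A B => ∀ v : Bool, w ≤ v → force h v A → force h v B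
  | w, .neg A => ∀ v : Bool, w ≤ v → ¬ force h v A

/-- An assignment is legitimate when no atom gets the forbidden value `(⊤,⊥)`. -/
def Persistent {α : Type} (h : α → Bool × Bool) : Prop :=
  ∀ x, (h x).1 = true → (h x).2 = true

def bigAnd {α : Type} : List (Form α) → Form α
  | [] => .top
  | f :: fs => .and f (bigAnd fs)

def bigOr {α : Type} : List (Form α) → Form α
  | [] => .bot
  | f :: fs => .or f (bigOr fs)

/-- The list of attackers of `x` in the network `(α, R)`. -/
noncomputable def attackers {α : Type} [Fintype α] (R : α → α → Prop) [DecidableRel R] (x : α) : List α :=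
  (Finset.univ.filter (fun y => R y x)).toList

/-- (a1)  `x → (n ∨ ⋀_{yRx} ¬y)` -/
noncomputable def fa1 {α : Type} [Fintype α] (R : α → α → Prop) [DecidableRel R] (x : α) : Form α :=
  .imp (.atom x) (.or .nconst (bigAnd ((attackers R x).map (fun y => .neg (.atom y)))))

/-- (a2)  `(⋀_{yRx} ¬y) → (n ∨ x)` -/
noncomputable def fa2 {α : Type} [Fintype α] (R : α → α → Prop) [DecidableRel R] (x : α) : Form α :=
  .imp (bigAnd ((attackers R x).map (fun y => .neg (.atom y)))) (.or .nconst (.atom x))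

/-- (b1)  `¬x → (n ∨ ⋁_{yRx} y)` -/
noncomputable def fb1 {α : Type} [Fintype α] (R : α → α → Prop) [DecidableRel R] (x : α) : Form α :=
  .imp (.neg (.atom x)) (.or .nconst (bigOr ((attackers R x).map (fun y => .atom y))))

/-- (b2)  `(⋁_{yRx} y) → (¬x ∨ n)` -/
noncomputable def fb2 {α : Type} [Fintype α] (R : α → α → Prop) [DecidableRel R] (x : α) : Form α :=
  .imp (bigOr ((attackers R x).map (fun y => .atom y))) (.or (.neg (.atom x)) .nconst)

/-- `h` is a model of the theory `Δ_A`: every formula of `Δ_A` holds at `t`. -/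
def ModelsDelta {α : Type} [Fintype α] (h : α → Bool × Bool)
    (R : α → α → Prop) [DecidableRel R] : Prop :=
  ∀ x, force h false (fa1 R x) ∧ force h false (fa2 R x) ∧
    force h false (fb1 R x) ∧ force h false (fb2 R x)

/-- Caminada labelling / complete extension of the network `(α, R)`. -/
def IsCompleteExt {α : Type} (R : α → α → Prop) (l : α → Label) : Prop :=
  (∀ x, l x = .in_ ↔ ∀ y, R y x → l y = .out) ∧
  (∀ x, l x = .out ↔ ∃ y, R y x ∧ l y = .in_) ∧
  (∀ x, l x = .und ↔ ((∀ y, R y x → l y ≠ .in_) ∧ ∃ y, R y x ∧ l y = .und))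

/-- The labelling `λ_h` induced by an assignment `h`. -/
def lamOf {α : Type} (h : α → Bool × Bool) (x : α) : Label :=
  if h x = (true, true) then .in_ else if h x = (false, false) then .out else .und

/-- The assignment `h_λ` induced by a labelling `λ`. -/
def assignOf {α : Type} (l : α → Label) (x : α) : Bool × Bool :=
  match l x with
  | .in_ => (true, true)
  | .out => (false, false)
  | .und => (false, true)

/-!
At the world `t` the constant `n` is false, while every formula of `Δ_A` has `n` among the
disjuncts of its conclusion and so holds at `s` for free. Over a persistent assignment forcing is
monotone, so `¬y` is forced iff `y` fails at `s`; hence `Δ_A` says exactly that `x` holds at `t`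
iff all its attackers fail at `s`, and that `x` fails at `s` iff some attacker holds at `t`.
Read through `h ↦ λ_h` these are (C1) and (C2), and (C3) follows from them because there are
only three labels. The two translations are inverse to each other on persistent assignments.
-/

section Forcing

variable {α : Type} (h : α → Bool × Bool)

@[simp] lemma force_atom_false (x : α) : force h false (.atom x) ↔ (h x).1 = true := Iff.rfl

@[simp] lemma force_atom_true (x : α) : force h true (.atom x) ↔ (h x).2 = true := Iff.rfl

@[simp] lemma force_nconst (w : Bool) : force h w .nconst ↔ w = true := Iff.rfl

@[simp] lemma force_or (w : Bool) (A B : Form α) :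
    force h w (.or A B) ↔ force h w A ∨ force h w B := Iff.rfl

@[simp] lemma force_imp_false (A B : Form α) :
    force h false (.imp A B) ↔
      (force h false A → force h false B) ∧ (force h true A → force h true B) := by
  simp [force, Bool.forall_bool]

@[simp] lemma force_bigAnd (w : Bool) (L : List (Form α)) :
    force h w (bigAnd L) ↔ ∀ f ∈ L, force h w f := by
  induction L with
  | nil => simp [bigAnd, force]
  | cons f fs ih => simp [bigAnd, force, ih]

@[simp] lemma force_bigOr (w : Bool) (L : List (Form α)) :
    force h w (bigOr L) ↔ ∃ f ∈ L, force h w f := by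
  induction L with
  | nil => simp [bigOr, force]
  | cons f fs ih => simp [bigOr, ih]

variable {h}

lemma Persistent.force_mono (hp : Persistent h) {A : Form α} :
    force h false A → force h true A := by
  induction A with
  | atom x => exact hp x
  | and A B ihA ihB => exact And.imp ihA ihB
  | or A B ihA ihB => exact Or.imp ihA ihB
  | imp A B => exact fun H v _ => H v (Bool.false_le v)
  | neg A => exact fun H v _ => H v (Bool.false_le v)
  | _ => simp [force]

@[simp] lemma Persistent.force_neg (hp : Persistent h) (w : Bool) (A : Form α) :
    force h w (.neg A) ↔ ¬ force h true A := by
  cases w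
  · simp only [force, Bool.false_le, forall_const, Bool.forall_bool, and_iff_right_iff_imp]
    exact mt hp.force_mono
  · simp [force, Bool.forall_bool]

end Forcing

@[simp] lemma mem_attackers {α : Type} [Fintype α] (R : α → α → Prop) [DecidableRel R]
    {x y : α} : y ∈ attackers R x ↔ R y x := by
  simp [attackers]

lemma Persistent.modelsDelta_iff {α : Type} [Fintype α] {h : α → Bool × Bool}
    (hp : Persistent h) (R : α → α → Prop) [DecidableRel R] :
    ModelsDelta h R ↔ ∀ x,
      ((h x).1 = true ↔ ∀ y, R y x → (h y).2 = false) ∧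
      ((h x).2 = false ↔ ∃ y, R y x ∧ (h y).1 = true) := by
  refine forall_congr' fun x => ?_
  simp only [fa1, fa2, fb1, fb2, force_imp_false, force_atom_false, force_atom_true, force_or,
    force_nconst, force_bigAnd, force_bigOr, hp.force_neg, List.mem_map, mem_attackers,
    forall_exists_index, and_imp, forall_apply_eq_imp_iff₂, exists_exists_and_eq_and,
    Bool.false_eq_true, Bool.not_eq_true, false_or, true_or, or_false, or_true, implies_true,
    and_true, iff_def, and_assoc]

lemma Label.eq_und_iff {a : Label} : a = .und ↔ a ≠ .in_ ∧ a ≠ .out := by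
  cases a <;> simp

lemma isCompleteExt_iff {α : Type} (R : α → α → Prop) (l : α → Label) :
    IsCompleteExt R l ↔ ∀ x,
      (l x = .in_ ↔ ∀ y, R y x → l y = .out) ∧ (l x = .out ↔ ∃ y, R y x ∧ l y = .in_) := by
  refine ⟨fun H x => ⟨H.1 x, H.2.1 x⟩, fun H => ⟨fun x => (H x).1, fun x => (H x).2, fun x => ?_⟩⟩
  rw [Label.eq_und_iff, Ne, Ne, (H x).1, (H x).2]
  push Not
  constructor
  · rintro ⟨⟨y, hy, hy_out⟩, h_in⟩
    exact ⟨h_in, y, hy, Label.eq_und_iff.2 ⟨h_in y hy, hy_out⟩⟩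
  · rintro ⟨h_in, y, hy, hy_und⟩
    exact ⟨⟨y, hy, by simp [hy_und]⟩, h_in⟩

section Translation

variable {α : Type}

lemma persistent_assignOf (l : α → Label) : Persistent (assignOf l) := by
  intro x
  cases hx : l x <;> simp [assignOf, hx]

lemma lamOf_assignOf (l : α → Label) : lamOf (assignOf l) = l := by
  funext x
  cases hx : l x <;> simp [assignOf, lamOf, hx]

lemma Persistent.assignOf_lamOf {h : α → Bool × Bool} (hp : Persistent h) :
    assignOf (lamOf h) = h := by
  funext x
  have hpx := hp x
  rcases hx : h x with ⟨_ | _, _ | _⟩ <;> simp_all [assignOf, lamOf]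

@[simp] lemma assignOf_fst_eq_true (l : α → Label) (x : α) :
    (assignOf l x).1 = true ↔ l x = .in_ := by
  cases hx : l x <;> simp [assignOf, hx]

@[simp] lemma assignOf_snd_eq_false (l : α → Label) (x : α) :
    (assignOf l x).2 = false ↔ l x = .out := by
  cases hx : l x <;> simp [assignOf, hx]

lemma modelsDelta_assignOf_iff [Fintype α] (R : α → α → Prop) [DecidableRel R]
    (l : α → Label) : ModelsDelta (assignOf l) R ↔ IsCompleteExt R l := by
  simp only [(persistent_assignOf l).modelsDelta_iff, assignOf_fst_eq_true,
    assignOf_snd_eq_false, isCompleteExt_iff]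

end Translation

theorem stmt2_general {α : Type} [Fintype α] (R : α → α → Prop) [DecidableRel R] :
    (∀ h : α → Bool × Bool, Persistent h → ModelsDelta h R →
      IsCompleteExt R (lamOf h) ∧ assignOf (lamOf h) = h) ∧
    (∀ l : α → Label, IsCompleteExt R l →
      Persistent (assignOf l) ∧ ModelsDelta (assignOf l) R ∧ lamOf (assignOf l) = l) := by
  refine ⟨fun h hp hΔ => ?_, fun l hl => ?_⟩
  · rw [← hp.assignOf_lamOf, modelsDelta_assignOf_iff] at hΔ
    exact ⟨hΔ, hp.assignOf_lamOf⟩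
  · exact ⟨persistent_assignOf l, (modelsDelta_assignOf_iff R l).2 hl, lamOf_assignOf l⟩

/-- The maps `h ↦ λ_h` and `λ ↦ h_λ` are mutually inverse bijections between
the assignments that are models of `Δ_A` and the complete extensions of `A`. -/
theorem stmt2 {α : Type} [Fintype α] [Nonempty α] (R : α → α → Prop) [DecidableRel R] :
    (∀ h : α → Bool × Bool, Persistent h → ModelsDelta h R →
      IsCompleteExt R (lamOf h) ∧ assignOf (lamOf h) = h) ∧
    (∀ l : α → Label, IsCompleteExt R l →
      Persistent (assignOf l) ∧ ModelsDelta (assignOf l) R ∧ lamOf (assignOf l) = l) :=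
  stmt2_general R
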